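/- Fix an integer n ≥ 1 and 0 < ε ≤ 1/4. Define ψ_ε : Q → ℝ by ψ_ε(x) = min( ψ⁺(x), 4εn²x₁² + 1/4 − ε ) and S_ε = { x ∈ Q : |x₂| ≤ (ε/n)(1 − 4n²x₁²) }. Then: ψ_ε is Lipschitz; ψ_ε = ψ_∂Q on ∂Q; ψ_ε(x) = 4εn²x₁² + 1/4 − ε if and only if x ∈ S_ε; and for every continuous σ : ℝ² → ℝ, ∫_Q σ(∇ψ⁺(x)) dx − ∫_Q σ(∇ψ_ε(x)) dx = ∫_{S_ε} [ (σ(0,n) + σ(0,−n))/2 − σ(8εn²x₁, 0) ] dx. -/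

import Mathlib

open MeasureTheory

/-- The rescaled Aztec diamond `Q = {x : |x₁| + |x₂| ≤ 1/(2n)}`. -/
def Qset (n : ℕ) : Set (ℝ × ℝ) := {x | |x.1| + |x.2| ≤ 1 / (2 * n)}

/-- The boundary `∂Q = {x : |x₁| + |x₂| = 1/(2n)}`. -/
def bdQ (n : ℕ) : Set (ℝ × ℝ) := {x | |x.1| + |x.2| = 1 / (2 * n)}

/-- The boundary datum `ψ_∂Q(x) = (n/2)(|x₁| − |x₂|)`. -/
noncomputable def psiBd (n : ℕ) (x : ℝ × ℝ) : ℝ := ((n : ℝ) / 2) * (|x.1| - |x.2|)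

/-- `ψ⁺(x) = 1/4 − n|x₂|`. -/
noncomputable def psiPlus (n : ℕ) (x : ℝ × ℝ) : ℝ := 1 / 4 - (n : ℝ) * |x.2|

/-- The comparison function `ψ_ε(x) = min(ψ⁺(x), 4εn²x₁² + 1/4 − ε)`. -/
noncomputable def psiEps (n : ℕ) (ε : ℝ) (x : ℝ × ℝ) : ℝ :=
  min (psiPlus n x) (4 * ε * (n : ℝ) ^ 2 * x.1 ^ 2 + 1 / 4 - ε)

/-- The lens-shaped region `S_ε = {x ∈ Q : |x₂| ≤ (ε/n)(1 − 4n²x₁²)}`. -/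
def Sset (n : ℕ) (ε : ℝ) : Set (ℝ × ℝ) :=
  {x | x ∈ Qset n ∧ |x.2| ≤ (ε / n) * (1 - 4 * (n : ℝ) ^ 2 * x.1 ^ 2)}

/-- The gradient `∇ψ(x) = (∂₁ψ(x), ∂₂ψ(x))` (junk value `0` where `ψ` is not
differentiable; a Lipschitz function is differentiable a.e.). -/
noncomputable def grad (ψ : ℝ × ℝ → ℝ) (x : ℝ × ℝ) : ℝ × ℝ :=
  (fderiv ℝ ψ x (1, 0), fderiv ℝ ψ x (0, 1))

/-!
`ψ_ε` is the minimum of the `n`-Lipschitz function `ψ⁺` and a smooth parabola, so it is locally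
Lipschitz, hence Lipschitz on the compact set `Q`. On `∂Q` one has `ψ⁺ = ψ_∂Q`, and with
`t = n|x₁| ∈ [0, 1/2]` the parabola exceeds `ψ⁺` by `(1 - 2t)(1/2 - ε(1 + 2t)) ≥ 0`.

For the integrals: off the null set where `x₂ = 0` or the two branches of the minimum agree,
`∇ψ_ε` is the gradient of the strictly smaller branch, so `σ(∇ψ⁺)` and `σ(∇ψ_ε)` differ only on
`S_ε`, where `∇ψ_ε = (8εn²x₁, 0)`. There `∇ψ⁺ = (0, ∓n)` according to the sign of `x₂`, and since
`S_ε` is invariant under the measure-preserving reflection `x₂ ↦ -x₂`, the integral of `σ(∇ψ⁺)`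
over `S_ε` equals that of the average `(σ(0, n) + σ(0, -n))/2`.
-/

section grad

variable {f g : ℝ × ℝ → ℝ} {x : ℝ × ℝ}

lemma Filter.EventuallyEq.grad_eq (h : f =ᶠ[nhds x] g) : grad f x = grad g x := by
  simp only [grad, h.fderiv_eq]

lemma grad_min_of_lt (hf : ContinuousAt f x) (hg : ContinuousAt g x) (h : f x < g x) :
    grad (fun y => min (f y) (g y)) x = grad f x :=
  Filter.EventuallyEq.grad_eq <| (hf.eventually_lt hg h).mono fun _ hy => min_eq_left hy.le

lemma grad_comp_fst {h : ℝ → ℝ} {h' : ℝ} (hh : HasDerivAt h h' x.1) :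
    grad (fun y => h y.1) x = (h', 0) := by
  have hd := hh.comp_hasFDerivAt x (hasFDerivAt_fst (𝕜 := ℝ) (p := x))
  change grad (h ∘ _) x = _
  simp [grad, hd.fderiv]

lemma grad_comp_snd {h : ℝ → ℝ} {h' : ℝ} (hh : HasDerivAt h h' x.2) :
    grad (fun y => h y.2) x = (0, h') := by
  have hd := hh.comp_hasFDerivAt x (hasFDerivAt_snd (𝕜 := ℝ) (p := x))
  change grad (h ∘ _) x = _
  simp [grad, hd.fderiv]

lemma measurable_grad (f : ℝ × ℝ → ℝ) : Measurable (grad f) :=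
  (measurable_fderiv_apply_const ℝ f _).prodMk (measurable_fderiv_apply_const ℝ f _)

end grad

lemma volume_setOf_abs_snd_eq {φ : ℝ → ℝ} (hφ : Measurable φ) :
    volume {x : ℝ × ℝ | |x.2| = φ x.1} = 0 := by
  have hm : MeasurableSet {x : ℝ × ℝ | |x.2| = φ x.1} :=
    measurableSet_eq_fun (by fun_prop) (hφ.comp measurable_fst)
  rw [Measure.volume_eq_prod, Measure.measure_prod_null hm]
  exact Filter.Eventually.of_forall fun a => measure_mono_null (t := {φ a, -φ a})
    (fun _ hy => eq_or_eq_neg_of_abs_eq hy) ((Set.toFinite _).measure_zero _)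

lemma ae_snd_ne_zero : ∀ᵐ x : ℝ × ℝ, x.2 ≠ 0 := by
  simpa using measure_eq_zero_iff_ae_notMem.mp (volume_setOf_abs_snd_eq (φ := fun _ => 0)
    measurable_const)

lemma setIntegral_eq_half_setIntegral_add_comp {α : Type*} [MeasurableSpace α] {μ : Measure α}
    {e : α → α} (he : MeasurePreserving e μ μ) (he' : MeasurableEmbedding e) {s : Set α}
    (hs : e ⁻¹' s = s) {f : α → ℝ} (hf : IntegrableOn f s μ) :
    ∫ x in s, f x ∂μ = (∫ x in s, (f x + f (e x)) ∂μ) / 2 := by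
  have hfe : IntegrableOn (fun x => f (e x)) s μ := by
    simpa only [hs, Function.comp_def] using (he.integrableOn_comp_preimage he').2 hf
  have hinv : ∫ x in s, f (e x) ∂μ = ∫ x in s, f x ∂μ := by
    simpa only [hs] using he.setIntegral_preimage_emb he' f s
  rw [integral_add hf hfe, hinv]
  ring

noncomputable def parabolicBranch (n : ℕ) (ε : ℝ) (x : ℝ × ℝ) : ℝ :=
  4 * ε * (n : ℝ) ^ 2 * x.1 ^ 2 + 1 / 4 - ε

section branches

variable (n : ℕ) (ε : ℝ) {x : ℝ × ℝ}

lemma lipschitzWith_psiPlus : LipschitzWith n (psiPlus n) := by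
  refine LipschitzWith.of_dist_le_mul fun x y => ?_
  simp only [psiPlus, Real.dist_eq, NNReal.coe_natCast]
  calc |1 / 4 - n * |x.2| - (1 / 4 - n * |y.2|)| = |n * (|y.2| - |x.2|)| := by
        congr 1; ring
    _ = n * |(|y.2| - |x.2|)| := by
        rw [abs_mul, Nat.abs_cast]
    _ ≤ n * |y.2 - x.2| := mul_le_mul_of_nonneg_left (abs_abs_sub_abs_le_abs_sub _ _) n.cast_nonneg
    _ ≤ n * dist x y := by
        rw [Prod.dist_eq, abs_sub_comm, ← Real.dist_eq]; gcongr; exact le_max_right _ _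

lemma continuous_psiPlus : Continuous (psiPlus n) := (lipschitzWith_psiPlus n).continuous

lemma contDiff_parabolicBranch : ContDiff ℝ 1 (parabolicBranch n ε) := by
  unfold parabolicBranch; fun_prop

lemma locallyLipschitz_psiEps : LocallyLipschitz (psiEps n ε) :=
  (lipschitzWith_psiPlus n).locallyLipschitz.min (contDiff_parabolicBranch n ε).locallyLipschitz

lemma grad_psiPlus_of_pos (hx : 0 < x.2) : grad (psiPlus n) x = (0, -(n : ℝ)) := by
  refine (grad_comp_snd (h := fun t => 1 / 4 - (n : ℝ) * |t|)
    (((hasDerivAt_abs_pos hx).const_mul (n : ℝ)).const_sub (1 / 4))).trans ?_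
  simp

lemma grad_psiPlus_of_neg (hx : x.2 < 0) : grad (psiPlus n) x = (0, (n : ℝ)) := by
  refine (grad_comp_snd (h := fun t => 1 / 4 - (n : ℝ) * |t|)
    (((hasDerivAt_abs_neg hx).const_mul (n : ℝ)).const_sub (1 / 4))).trans ?_
  simp

lemma grad_parabolicBranch : grad (parabolicBranch n ε) x = (8 * ε * n ^ 2 * x.1, 0) := by
  have := (((hasDerivAt_pow 2 x.1).const_mul (4 * ε * (n : ℝ) ^ 2)).add_const (1 / 4)).sub_const ε
  refine (grad_comp_fst (h := fun t => 4 * ε * (n : ℝ) ^ 2 * t ^ 2 + 1 / 4 - ε) this).trans ?_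
  simp only [Nat.cast_ofNat, Nat.add_one_sub_one, pow_one, Prod.mk.injEq, and_true]
  ring

lemma continuous_parabolicBranch : Continuous (parabolicBranch n ε) :=
  (contDiff_parabolicBranch n ε).continuous

lemma grad_psiEps_of_gt (h : psiPlus n x < parabolicBranch n ε x) :
    grad (psiEps n ε) x = grad (psiPlus n) x :=
  grad_min_of_lt (continuous_psiPlus n).continuousAt
    (continuous_parabolicBranch n ε).continuousAt h

lemma grad_psiEps_of_lt (h : parabolicBranch n ε x < psiPlus n x) :
    grad (psiEps n ε) x = (8 * ε * n ^ 2 * x.1, 0) := by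
  have hmin : psiEps n ε = fun y => min (parabolicBranch n ε y) (psiPlus n y) :=
    funext fun _ => min_comm _ _
  rw [hmin, grad_min_of_lt (continuous_parabolicBranch n ε).continuousAt
    (continuous_psiPlus n).continuousAt h, grad_parabolicBranch]

end branches

section region

variable {n : ℕ} {ε : ℝ} {x : ℝ × ℝ}

lemma isCompact_Qset (n : ℕ) : IsCompact (Qset n) := by
  refine Metric.isCompact_of_isClosed_isBounded (isClosed_le (by fun_prop) continuous_const)
    ((Metric.isBounded_closedBall (x := (0 : ℝ × ℝ)) (r := 1 / (2 * n))).subset fun x hx => ?_)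
  have hx : |x.1| + |x.2| ≤ 1 / (2 * n) := hx
  simp only [Metric.mem_closedBall, dist_zero_right, Prod.norm_def, Real.norm_eq_abs]
  exact max_le (by linarith [abs_nonneg x.2]) (by linarith [abs_nonneg x.1])

lemma Sset_subset_Qset (n : ℕ) (ε : ℝ) : Sset n ε ⊆ Qset n := fun _ hx => hx.1

lemma isCompact_Sset (n : ℕ) (ε : ℝ) : IsCompact (Sset n ε) :=
  (isCompact_Qset n).of_isClosed_subset
    ((isCompact_Qset n).isClosed.inter (isClosed_le (f := fun x : ℝ × ℝ => |x.2|)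
      (by fun_prop) (by fun_prop)))
    (Sset_subset_Qset n ε)

lemma Sset_reflect_iff : (x.1, -x.2) ∈ Sset n ε ↔ x ∈ Sset n ε := by
  simp [Sset, Qset, abs_neg]

lemma parabolicBranch_le_psiPlus_iff (hn : 0 < n) :
    parabolicBranch n ε x ≤ psiPlus n x ↔ |x.2| ≤ (ε / n) * (1 - 4 * (n : ℝ) ^ 2 * x.1 ^ 2) := by
  rw [parabolicBranch, psiPlus, div_mul_eq_mul_div, le_div_iff₀ (by exact_mod_cast hn)]
  constructor <;> intro h <;> linarith

lemma mem_Sset_iff (hn : 0 < n) (hx : x ∈ Qset n) :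
    x ∈ Sset n ε ↔ parabolicBranch n ε x ≤ psiPlus n x := by
  rw [parabolicBranch_le_psiPlus_iff hn]
  exact and_iff_right hx

lemma psiPlus_eq_psiBd (hn : 0 < n) (hx : x ∈ bdQ n) : psiPlus n x = psiBd n x := by
  have hx : |x.1| = 1 / (2 * n) - |x.2| := by linarith [show |x.1| + |x.2| = 1 / (2 * n) from hx]
  have : (n : ℝ) ≠ 0 := by exact_mod_cast hn.ne'
  simp only [psiPlus, psiBd, hx]
  field_simp
  ring

lemma psiPlus_le_parabolicBranch (hn : 0 < n) (hε : ε ≤ 1 / 4) (hx : x ∈ bdQ n) :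
    psiPlus n x ≤ parabolicBranch n ε x := by
  set t := (n : ℝ) * |x.1|
  have hn' : (0 : ℝ) < n := by exact_mod_cast hn
  have hx2 : (n : ℝ) * |x.2| = 1 / 2 - t := by
    have : |x.1| + |x.2| = 1 / (2 * n) := hx
    field_simp at this
    linarith
  have ht : t ≤ 1 / 2 := by nlinarith [abs_nonneg x.2]
  have key : parabolicBranch n ε x - psiPlus n x = (1 - 2 * t) * (1 / 2 - ε * (1 + 2 * t)) := by
    simp only [parabolicBranch, psiPlus, hx2]
    rw [show (x.1 ^ 2 : ℝ) = |x.1| ^ 2 from (sq_abs _).symm]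
    ring
  have ht0 : 0 ≤ t := mul_nonneg n.cast_nonneg (abs_nonneg x.1)
  rw [← sub_nonneg, key]
  exact mul_nonneg (by linarith) (by nlinarith)

lemma lipschitzOnWith_psiEps (n : ℕ) (ε : ℝ) : ∃ K, LipschitzOnWith K (psiEps n ε) (Qset n) :=
  (locallyLipschitz_psiEps n ε).locallyLipschitzOn.exists_lipschitzOnWith_of_compact
    (isCompact_Qset n)

end region

lemma ae_psiPlus_ne_parabolicBranch {n : ℕ} (hn : 0 < n) (ε : ℝ) :
    ∀ᵐ x : ℝ × ℝ, psiPlus n x ≠ parabolicBranch n ε x := by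
  have hn' : (n : ℝ) ≠ 0 := by exact_mod_cast hn.ne'
  filter_upwards [measure_eq_zero_iff_ae_notMem.mp (volume_setOf_abs_snd_eq
    (φ := fun t => (ε - 4 * ε * (n : ℝ) ^ 2 * t ^ 2) / n) (by fun_prop))] with x hx heq
  refine hx ?_
  simp only [psiPlus, parabolicBranch] at heq ⊢
  field_simp
  linarith

section integral

variable {n : ℕ} {ε : ℝ} {σ : ℝ × ℝ → ℝ}

lemma ae_grad_psiEps_eq_of_mem_Sset (hn : 0 < n) :
    ∀ᵐ x, x ∈ Sset n ε → grad (psiEps n ε) x = (8 * ε * n ^ 2 * x.1, 0) := by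
  filter_upwards [ae_psiPlus_ne_parabolicBranch hn ε] with x hne hx
  exact grad_psiEps_of_lt n ε (((mem_Sset_iff hn hx.1).1 hx).lt_of_ne hne.symm)

lemma grad_psiEps_eq_of_mem_diff (hn : 0 < n) {x : ℝ × ℝ} (hx : x ∈ Qset n \ Sset n ε) :
    grad (psiEps n ε) x = grad (psiPlus n) x :=
  grad_psiEps_of_gt n ε (not_le.1 fun h => hx.2 ((mem_Sset_iff hn hx.1).2 h))

lemma sigma_grad_psiPlus_add_reflect {x : ℝ × ℝ} (hx : x.2 ≠ 0) :
    σ (grad (psiPlus n) x) + σ (grad (psiPlus n) (x.1, -x.2)) = σ (0, n) + σ (0, -n) := by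
  rcases hx.lt_or_gt with h | h
  · rw [grad_psiPlus_of_neg n h, grad_psiPlus_of_pos n (neg_pos.2 h)]
  · rw [grad_psiPlus_of_pos n h, grad_psiPlus_of_neg n (neg_lt_zero.2 h), add_comm]

lemma integrableOn_sigma_grad_psiPlus (hσ : Continuous σ) {s : Set (ℝ × ℝ)}
    (hs : volume s ≠ ⊤) : IntegrableOn (fun x => σ (grad (psiPlus n) x)) s := by
  refine Measure.integrableOn_of_bounded (M := max ‖σ (0, n)‖ ‖σ (0, -n)‖) hs
    (hσ.measurable.comp (measurable_grad _)).aestronglyMeasurable (ae_restrict_of_ae ?_)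
  filter_upwards [ae_snd_ne_zero] with x hx
  rcases hx.lt_or_gt with h | h
  · simp [grad_psiPlus_of_neg n h]
  · simp [grad_psiPlus_of_pos n h]

lemma setIntegral_sigma_grad_psiPlus (hσ : Continuous σ) {s : Set (ℝ × ℝ)}
    (hs : ∀ x : ℝ × ℝ, (x.1, -x.2) ∈ s ↔ x ∈ s) (hs' : volume s ≠ ⊤) :
    ∫ x in s, σ (grad (psiPlus n) x) = ∫ _ in s, (σ (0, n) + σ (0, -n)) / 2 := by
  have hreflect : MeasurePreserving (Prod.map id Neg.neg : ℝ × ℝ → ℝ × ℝ) volume volume :=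
    (MeasurePreserving.id volume).prod (Measure.measurePreserving_neg volume)
  rw [setIntegral_eq_half_setIntegral_add_comp hreflect
    (MeasurableEquiv.prodCongr (.refl ℝ) (.neg ℝ)).measurableEmbedding (Set.ext hs)
    (integrableOn_sigma_grad_psiPlus hσ hs'), integral_div]
  congr 1
  exact integral_congr_ae (ae_restrict_of_ae
    (ae_snd_ne_zero.mono fun _ hx => sigma_grad_psiPlus_add_reflect hx))

lemma integrableOn_sigma_grad_psiEps (hn : 0 < n) (hσ : Continuous σ) :
    IntegrableOn (fun x => σ (grad (psiEps n ε) x)) (Qset n) := by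
  have hSm : MeasurableSet (Sset n ε) := (isCompact_Sset n ε).isClosed.measurableSet
  have hS : IntegrableOn (fun x => σ (grad (psiEps n ε) x)) (Sset n ε) := by
    have hc : Continuous fun x : ℝ × ℝ => σ (8 * ε * n ^ 2 * x.1, 0) := by fun_prop
    refine (hc.continuousOn.integrableOn_compact (isCompact_Sset n ε)).congr_fun_ae
      ((ae_restrict_iff' hSm).2 ?_)
    filter_upwards [ae_grad_psiEps_eq_of_mem_Sset hn] with x hx hxS
    rw [hx hxS]
  have hQS : IntegrableOn (fun x => σ (grad (psiEps n ε) x)) (Qset n \ Sset n ε) :=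
    (integrableOn_sigma_grad_psiPlus (n := n) hσ (isCompact_Qset n).measure_lt_top.ne).mono_set
      Set.sdiff_subset |>.congr_fun (fun x hx => by simp only [grad_psiEps_eq_of_mem_diff hn hx])
        ((isCompact_Qset n).isClosed.measurableSet.diff hSm)
  rw [← Set.union_sdiff_cancel (Sset_subset_Qset n ε)]
  exact hS.union hQS

lemma integral_sigma_grad_psiPlus_sub_integral_sigma_grad_psiEps (hn : 0 < n)
    (hσ : Continuous σ) :
    (∫ x in Qset n, σ (grad (psiPlus n) x)) - (∫ x in Qset n, σ (grad (psiEps n ε) x))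
      = ∫ x in Sset n ε, ((σ (0, n) + σ (0, -n)) / 2 - σ (8 * ε * n ^ 2 * x.1, 0)) := by
  have hSQ := Sset_subset_Qset n ε
  have hQm : MeasurableSet (Qset n) := (isCompact_Qset n).isClosed.measurableSet
  have hSm : MeasurableSet (Sset n ε) := (isCompact_Sset n ε).isClosed.measurableSet
  have hSfin : volume (Sset n ε) ≠ ⊤ := (isCompact_Sset n ε).measure_lt_top.ne
  have hplus := integrableOn_sigma_grad_psiPlus (n := n) hσ (isCompact_Qset n).measure_lt_top.ne
  have hc : IntegrableOn (fun x : ℝ × ℝ => σ (8 * ε * n ^ 2 * x.1, 0)) (Sset n ε) :=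
    (Continuous.continuousOn (by fun_prop)).integrableOn_compact (isCompact_Sset n ε)
  calc (∫ x in Qset n, σ (grad (psiPlus n) x)) - (∫ x in Qset n, σ (grad (psiEps n ε) x))
      = ∫ x in Qset n, (σ (grad (psiPlus n) x) - σ (grad (psiEps n ε) x)) :=
        (integral_sub hplus (integrableOn_sigma_grad_psiEps hn hσ)).symm
    _ = ∫ x in Sset n ε, (σ (grad (psiPlus n) x) - σ (grad (psiEps n ε) x)) :=
        setIntegral_eq_of_subset_of_ae_sdiff_eq_zero hQm.nullMeasurableSet hSQ
          (.of_forall fun x hx => by rw [grad_psiEps_eq_of_mem_diff hn hx, sub_self])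
    _ = ∫ x in Sset n ε, (σ (grad (psiPlus n) x) - σ (8 * ε * n ^ 2 * x.1, 0)) :=
        setIntegral_congr_ae hSm ((ae_grad_psiEps_eq_of_mem_Sset hn).mono fun x hx hxS => by
          rw [hx hxS])
    _ = (∫ x in Sset n ε, σ (grad (psiPlus n) x)) - ∫ x in Sset n ε, σ (8 * ε * n ^ 2 * x.1, 0) :=
        integral_sub (hplus.mono_set hSQ) hc
    _ = ∫ x in Sset n ε, ((σ (0, n) + σ (0, -n)) / 2 - σ (8 * ε * n ^ 2 * x.1, 0)) := by
        rw [setIntegral_sigma_grad_psiPlus hσ (fun _ => Sset_reflect_iff) hSfin]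
        exact (integral_sub (integrableOn_const (C := (σ (0, n) + σ (0, -n)) / 2) hSfin) hc).symm

end integral

theorem stmt_17_general (n : ℕ) (hn : 1 ≤ n) (ε : ℝ) (hε : ε ≤ 1 / 4) :
    (∃ K : NNReal, LipschitzOnWith K (psiEps n ε) (Qset n)) ∧
    (∀ x ∈ bdQ n, psiEps n ε x = psiBd n x) ∧
    (∀ x ∈ Qset n,
      (psiEps n ε x = 4 * ε * (n : ℝ) ^ 2 * x.1 ^ 2 + 1 / 4 - ε ↔ x ∈ Sset n ε)) ∧
    ∀ σ : ℝ × ℝ → ℝ, Continuous σ →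
      (∫ x in Qset n, σ (grad (psiPlus n) x)) - (∫ x in Qset n, σ (grad (psiEps n ε) x))
        = ∫ x in Sset n ε,
            ((σ (0, (n : ℝ)) + σ (0, -(n : ℝ))) / 2 - σ (8 * ε * (n : ℝ) ^ 2 * x.1, 0)) :=
  ⟨lipschitzOnWith_psiEps n ε,
    fun _ hx => (min_eq_left (psiPlus_le_parabolicBranch hn hε hx)).trans (psiPlus_eq_psiBd hn hx),
    fun _ hx => min_eq_right_iff.trans (mem_Sset_iff hn hx).symm,
    fun _ hσ => integral_sigma_grad_psiPlus_sub_integral_sigma_grad_psiEps hn hσ⟩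

/-- `ψ_ε` is Lipschitz on `Q`, agrees with `ψ_∂Q` on `∂Q`, equals the
parabolic branch exactly on `S_ε`, and for every continuous `σ`,
`∫_Q σ(∇ψ⁺) − ∫_Q σ(∇ψ_ε) = ∫_{S_ε} [(σ(0,n)+σ(0,−n))/2 − σ(8εn²x₁,0)]`. -/
theorem stmt_17 (n : ℕ) (hn : 1 ≤ n) (ε : ℝ) (hε0 : 0 < ε) (hε : ε ≤ 1 / 4) :
    (∃ K : NNReal, LipschitzOnWith K (psiEps n ε) (Qset n)) ∧
    (∀ x ∈ bdQ n, psiEps n ε x = psiBd n x) ∧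
    (∀ x ∈ Qset n,
      (psiEps n ε x = 4 * ε * (n : ℝ) ^ 2 * x.1 ^ 2 + 1 / 4 - ε ↔ x ∈ Sset n ε)) ∧
    ∀ σ : ℝ × ℝ → ℝ, Continuous σ →
      (∫ x in Qset n, σ (grad (psiPlus n) x)) - (∫ x in Qset n, σ (grad (psiEps n ε) x))
        = ∫ x in Sset n ε,
            ((σ (0, (n : ℝ)) + σ (0, -(n : ℝ))) / 2 - σ (8 * ε * (n : ℝ) ^ 2 * x.1, 0)) :=
  stmt_17_general n hn ε hε
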